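/- Let F be in the class ℬ with Taylor expansion F(z) = ∑_{k=0}^∞ b_k z^k. Then for every r with 0 ≤ r ≤ 1/√3, one has ∑_{k=3}^∞ k² |b_k|² r^{2(k−1)} ≤ 9 r⁴ · (9/4 − |b₁|² − (4/3)|b₂|²). -/

import Mathlib

/-!
Write `F' z = ∑ c k * z ^ k` with `c k = (k + 1) * b (k + 1)`. On the circle `‖z‖ = ρ = 1 / √3`
the Bloch condition gives `‖F' z‖ ≤ 3 / 2`, so Gutzmer's inequality yields
`∑ ‖c k‖ ^ 2 * ρ ^ (2 * k) ≤ 9 / 4`. The terms `k = 0, 1` are `‖b 1‖ ^ 2` and `4 / 3 * ‖b 2‖ ^ 2`,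
and in the remaining ones `r ^ (2 * k) ≤ r ^ 4 * ρ ^ (2 * (k - 2)) = 9 * r ^ 4 * ρ ^ (2 * k)`.
-/

open Metric MeasureTheory AddCircle FormalMultilinearSeries
open scoped NNReal ENNReal

theorem hasFPowerSeriesOnBall_ofScalars_of_hasSum {𝕜 : Type*} [RCLike 𝕜] {f : 𝕜 → 𝕜}
    {c : ℕ → 𝕜} {R : ℝ≥0} (hR : 0 < R)
    (h : ∀ z ∈ ball (0 : 𝕜) R, HasSum (fun k => c k * z ^ k) (f z)) :
    HasFPowerSeriesOnBall f (ofScalars 𝕜 c) 0 R where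
  r_le := by
    refine ENNReal.le_of_forall_nnreal_lt fun s hs => ?_
    have hs' : ((s : ℝ) : 𝕜) ∈ ball (0 : 𝕜) R := by simpa using hs
    refine (ofScalars 𝕜 c).le_radius_of_tendsto (l := 0) ?_
    simpa [ofScalars_norm] using (h _ hs').summable.tendsto_atTop_zero.norm
  r_pos := by simpa using hR
  hasSum {z} hz := by
    simpa [ofScalars_apply_eq, mul_comm] using h z (by simpa using hz)

section OfScalars

variable {𝕜 : Type*} [NontriviallyNormedField 𝕜] {f : 𝕜 → 𝕜} {c : ℕ → 𝕜} {R : ℝ≥0∞}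

theorem HasFPowerSeriesOnBall.deriv_ofScalars [CompleteSpace 𝕜]
    (h : HasFPowerSeriesOnBall f (ofScalars 𝕜 c) 0 R) :
    HasFPowerSeriesOnBall (deriv f) (ofScalars 𝕜 fun k => (k + 1) * c (k + 1)) 0 R := by
  convert (ContinuousLinearMap.apply 𝕜 𝕜 (1 : 𝕜)).comp_hasFPowerSeriesOnBall h.fderiv using 1
  · rfl
  funext n
  rw [← mkPiRing_coeff_eq (ofScalars 𝕜 _),
    ← mkPiRing_coeff_eq ((ContinuousLinearMap.apply 𝕜 𝕜 1).compFormalMultilinearSeries _)]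
  congr 1
  rw [coeff_ofScalars]
  exact (((ofScalars 𝕜 c).derivSeries_coeff_one n).trans (by simp [nsmul_eq_mul])).symm

theorem HasFPowerSeriesOnBall.summable_norm_ofScalars_mul_pow
    (h : HasFPowerSeriesOnBall f (ofScalars 𝕜 c) 0 R) {r : ℝ≥0} (hr : r < R) :
    Summable fun k => ‖c k‖ * (r : ℝ) ^ k := by
  simpa using (ofScalars 𝕜 c).summable_norm_mul_pow (hr.trans_le h.r_le)

theorem HasFPowerSeriesOnBall.tsum_ofScalars_mul_pow
    (h : HasFPowerSeriesOnBall f (ofScalars 𝕜 c) 0 R) {z : 𝕜} (hz : ‖z‖ₑ < R) :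
    ∑' k, c k * z ^ k = f z := by
  simpa [ofScalars_apply_eq, mul_comm] using (h.hasSum (by simpa using hz)).tsum_eq

end OfScalars

theorem Orthonormal.tsum_sq_norm_le_of_hasSum {𝕜 E ι : Type*} [RCLike 𝕜] [NormedAddCommGroup E]
    [InnerProductSpace 𝕜 E] {v : ι → E} (hv : Orthonormal 𝕜 v) {a : ι → 𝕜} {x : E}
    (h : HasSum (fun i => a i • v i) x) : ∑' i, ‖a i‖ ^ 2 ≤ ‖x‖ ^ 2 := by
  classical
  have hcoeff (j : ι) : inner 𝕜 (v j) x = a j := by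
    have hterm (i : ι) : inner 𝕜 (v j) (a i • v i) = if i = j then a j else 0 := by
      rw [inner_smul_right, orthonormal_iff_ite.mp hv]
      split_ifs <;> simp_all
    refine (h.mapL (innerSL 𝕜 (v j))).unique ?_
    simpa only [innerSL_apply_apply, hterm] using hasSum_ite_eq j (a j)
  simpa only [hcoeff] using hv.tsum_inner_products_le x

theorem tsum_sq_norm_le_of_hasSum_fourier {T : ℝ} [Fact (0 < T)] {a : ℕ → ℂ}
    {G : C(AddCircle T, ℂ)} (h : HasSum (fun k : ℕ => a k • fourier (k : ℤ)) G) :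
    ∑' k, ‖a k‖ ^ 2 ≤ ‖G‖ ^ 2 := by
  set toL2 := ContinuousMap.toLp (E := ℂ) 2 (haarAddCircle (T := T)) ℂ
  have hL2 : HasSum (fun k : ℕ => a k • fourierLp 2 (k : ℤ)) (toL2 G) := by
    simpa only [map_smul] using h.mapL toL2
  have hnorm : ‖toL2 G‖ ≤ ‖G‖ := by
    refine (toL2.le_opNorm G).trans (mul_le_of_le_one_left (norm_nonneg G) ?_)
    simpa [measureUnivNNReal] using
      ContinuousMap.toLp_norm_le (p := 2) (E := ℂ) (haarAddCircle (T := T)) (𝕜 := ℂ)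
  calc ∑' k, ‖a k‖ ^ 2
      ≤ ‖toL2 G‖ ^ 2 :=
        (orthonormal_fourier.comp _ Nat.cast_injective).tsum_sq_norm_le_of_hasSum hL2
    _ ≤ ‖G‖ ^ 2 := by gcongr

theorem fourier_natCast_apply {T : ℝ} (k : ℕ) (x : AddCircle T) :
    fourier (k : ℤ) x = fourier 1 x ^ k := by
  simp [fourier_apply, AddCircle.toCircle_nsmul]

/-- Gutzmer's inequality, obtained from Bessel's inequality for the Fourier basis on the circle
`‖z‖ = ρ`. -/
theorem tsum_sq_norm_mul_pow_le {c : ℕ → ℂ} {ρ M : ℝ} (hρ : 0 ≤ ρ)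
    (hc : Summable fun k => ‖c k‖ * ρ ^ k)
    (hM : ∀ z : ℂ, ‖z‖ = ρ → ‖∑' k, c k * z ^ k‖ ≤ M) :
    ∑' k, ‖c k‖ ^ 2 * ρ ^ (2 * k) ≤ M ^ 2 := by
  have : Fact ((0 : ℝ) < 1) := ⟨one_pos⟩
  set a : ℕ → ℂ := fun k => c k * (ρ : ℂ) ^ k
  have hnorm_a (k : ℕ) : ‖a k‖ = ‖c k‖ * ρ ^ k := by
    simp [a, abs_of_nonneg hρ]
  have hsum : Summable fun k : ℕ => a k • fourier (T := 1) (k : ℤ) :=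
    .of_norm (by simpa only [norm_smul, fourier_norm, mul_one, hnorm_a] using hc)
  have hG (x : AddCircle (1 : ℝ)) :
      (∑' k : ℕ, a k • fourier (k : ℤ)) x = ∑' k, c k * ((ρ : ℂ) * fourier 1 x) ^ k := by
    rw [← ContinuousMap.tsum_apply hsum]
    simp only [ContinuousMap.smul_apply, smul_eq_mul, fourier_natCast_apply, a, mul_pow,
      mul_assoc]
  have hM0 : 0 ≤ M := (norm_nonneg _).trans (hM ρ (by simp [abs_of_nonneg hρ]))
  have hGM : ‖∑' k : ℕ, a k • fourier (T := 1) (k : ℤ)‖ ≤ M := by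
    refine (ContinuousMap.norm_le _ hM0).2 fun x => ?_
    rw [hG]
    exact hM _ (by simp [abs_of_nonneg hρ, Circle.norm_coe])
  calc ∑' k, ‖c k‖ ^ 2 * ρ ^ (2 * k) = ∑' k, ‖a k‖ ^ 2 := by
        simp only [hnorm_a, mul_pow, pow_mul']
    _ ≤ ‖∑' k : ℕ, a k • fourier (T := 1) (k : ℤ)‖ ^ 2 :=
        tsum_sq_norm_le_of_hasSum_fourier hsum.hasSum
    _ ≤ M ^ 2 := by gcongr

theorem Summable.sq {ι : Type*} {f : ι → ℝ} (hf : Summable f) : Summable fun i => f i ^ 2 := by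
  refine .of_norm_bounded_eventually hf.abs ?_
  filter_upwards [hf.tendsto_cofinite_zero.eventually (eventually_abs_sub_lt 0 one_pos)] with i hi
  rw [sub_zero] at hi
  rw [Real.norm_eq_abs, abs_pow, pow_two]
  exact mul_le_of_le_one_right (abs_nonneg _) hi.le

theorem tsum_nat_add_mul_pow_mul_pow_le {u : ℕ → ℝ} (hu : ∀ k, 0 ≤ u k) {x y : ℝ}
    (hs : Summable fun k => u k * y ^ k) (hx : 0 ≤ x) (hxy : x ≤ y) (n : ℕ) :
    (∑' k, u (k + n) * x ^ (k + n)) * y ^ n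
      ≤ x ^ n * (∑' k, u k * y ^ k - ∑ k ∈ Finset.range n, u k * y ^ k) := by
  have hy : 0 ≤ y := hx.trans hxy
  have hterm (k : ℕ) :
      u (k + n) * x ^ (k + n) * y ^ n ≤ x ^ n * (u (k + n) * y ^ (k + n)) := by
    have := hu (k + n)
    calc u (k + n) * x ^ (k + n) * y ^ n = x ^ n * (u (k + n) * x ^ k * y ^ n) := by ring
      _ ≤ x ^ n * (u (k + n) * y ^ k * y ^ n) := by gcongr
      _ = x ^ n * (u (k + n) * y ^ (k + n)) := by ring
  have hs' := ((summable_nat_add_iff n).2 hs).mul_left (x ^ n)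
  rw [← hs.sum_add_tsum_nat_add n, add_sub_cancel_left, ← tsum_mul_right, ← tsum_mul_left]
  refine Summable.tsum_le_tsum hterm (hs'.of_nonneg_of_le (fun k => ?_) hterm) hs'
  have := hu (k + n)
  positivity

theorem bloch_tail_from_three_general
    (F : ℂ → ℂ) (b : ℕ → ℂ)
    (hderiv : ∀ z ∈ ball (0:ℂ) 1, ‖deriv F z‖ ≤ 1 / (1 - ‖z‖ ^ 2))
    (hb : ∀ z ∈ ball (0:ℂ) 1, HasSum (fun k : ℕ => b k * z ^ k) (F z))
    (r : ℝ) (hr0 : 0 ≤ r) (hr1 : r ≤ 1 / Real.sqrt 3) :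
    ∑' k : ℕ, ((k + 3 : ℕ) : ℝ) ^ 2 * ‖b (k + 3)‖ ^ 2 * r ^ (2 * (k + 2))
      ≤ 9 * r ^ 4 * (9 / 4 - ‖b 1‖ ^ 2 - 4 / 3 * ‖b 2‖ ^ 2) := by
  set c : ℕ → ℂ := fun k => (k + 1) * b (k + 1)
  set ρ : ℝ≥0 := (NNReal.sqrt 3)⁻¹
  have hρ_sq : (ρ : ℝ) ^ 2 = 1 / 3 := by simp [ρ]
  have hρ_lt : ρ < 1 :=
    NNReal.coe_lt_one.1 <| (sq_lt_one_iff₀ ρ.coe_nonneg).1 (by rw [hρ_sq]; norm_num)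
  have hF' : HasFPowerSeriesOnBall (deriv F) (ofScalars ℂ c) 0 1 :=
    (hasFPowerSeriesOnBall_ofScalars_of_hasSum one_pos (by simpa using hb)).deriv_ofScalars
  have hsummable := hF'.summable_norm_ofScalars_mul_pow (r := ρ) (by simpa using hρ_lt)
  have hGutzmer : ∑' k, ‖c k‖ ^ 2 * (ρ : ℝ) ^ (2 * k) ≤ (3 / 2) ^ 2 := by
    refine tsum_sq_norm_mul_pow_le ρ.coe_nonneg hsummable fun z hz => ?_
    have hz1 : ‖z‖ < 1 := by simpa [hz] using hρ_lt
    rw [hF'.tsum_ofScalars_mul_pow (by simpa [← ofReal_norm] using hz1)]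
    calc ‖deriv F z‖ ≤ 1 / (1 - ‖z‖ ^ 2) := hderiv z (mem_ball_zero_iff.2 hz1)
      _ = 3 / 2 := by rw [hz, hρ_sq]; norm_num
  have htail := tsum_nat_add_mul_pow_mul_pow_le (u := fun k => ‖c k‖ ^ 2) (fun k => sq_nonneg _)
    (by simpa only [mul_pow, ← pow_mul, mul_comm 2] using hsummable.sq)
    (sq_nonneg r) (pow_le_pow_left₀ hr0 (by simpa [ρ] using hr1) 2) 2
  have hterm (k : ℕ) : ((k + 3 : ℕ) : ℝ) ^ 2 * ‖b (k + 3)‖ ^ 2 * r ^ (2 * (k + 2))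
      = ‖c (k + 2)‖ ^ 2 * (r ^ 2) ^ (k + 2) := by
    rw [norm_mul, ← pow_mul, mul_pow]
    norm_cast
  have hc0 : ‖c 0‖ ^ 2 = ‖b 1‖ ^ 2 := by simp [c]
  have hc1 : ‖c 1‖ ^ 2 = 4 * ‖b 2‖ ^ 2 := by norm_num [c, mul_pow]
  rw [tsum_congr hterm]
  simp only [pow_mul, hρ_sq] at hGutzmer
  simp only [Finset.sum_range_succ, Finset.sum_range_zero, hc0, hc1, hρ_sq] at htail
  nlinarith [mul_le_mul_of_nonneg_left hGutzmer (by positivity : (0 : ℝ) ≤ r ^ 4)]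

theorem bloch_tail_from_three
    (F : ℂ → ℂ) (b : ℕ → ℂ)
    (hF : DifferentiableOn ℂ F (ball (0:ℂ) 1))
    (hderiv : ∀ z ∈ ball (0:ℂ) 1, ‖deriv F z‖ ≤ 1 / (1 - ‖z‖ ^ 2))
    (hb : ∀ z ∈ ball (0:ℂ) 1, HasSum (fun k : ℕ => b k * z ^ k) (F z))
    (r : ℝ) (hr0 : 0 ≤ r) (hr1 : r ≤ 1 / Real.sqrt 3) :
    ∑' k : ℕ, ((k + 3 : ℕ) : ℝ) ^ 2 * ‖b (k + 3)‖ ^ 2 * r ^ (2 * (k + 2))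
      ≤ 9 * r ^ 4 * (9 / 4 - ‖b 1‖ ^ 2 - 4 / 3 * ‖b 2‖ ^ 2) :=
  bloch_tail_from_three_general F b hderiv hb r hr0 hr1
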